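/- arXiv:1507.02953 — 4 statements merged into one kernel-verified Lean document; each statement's English description precedes it below -/
import Mathlib

section
/- Let C be a closed, separable subset of a complete metric space X, (Ω, F) a measurable space, and T : Ω × C → C(X) a random operator such that for each ω ∈ Ω the map T(ω,·) is continuous (with respect to the Hausdorff distance on the nonempty closed subsets of X) and hemicompact. If for each ω ∈ Ω the set F(ω) = {x ∈ C : x ∈ T(ω,x)} is nonempty, then T has a random fixed point. -/
open Metric Set Filter Topology Pointwise
open scoped ENNReal

/-- Kuratowski measure of noncompactness: the infimum of all `e` such that `A` can be
covered by finitely many sets of diameter at most `e` (`∞` if no such cover exists,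
in particular for unbounded sets). -/
noncomputable def kuratowski {X : Type*} [PseudoEMetricSpace X] (A : Set X) : ℝ≥0∞ :=
  sInf {e : ℝ≥0∞ | ∃ cov : Finset (Set X), (A ⊆ ⋃ s ∈ cov, s) ∧ ∀ s ∈ cov, EMetric.diam s ≤ e}

/-- `S : C → 2^X` is condensing if `γ(S(A)) < γ(A)` for every `A ⊆ C` with `γ(A) > 0`. -/
def Condensing {X : Type*} [PseudoEMetricSpace X] (C : Set X) (S : X → Set X) : Prop :=
  ∀ A ⊆ C, 0 < kuratowski A → kuratowski (⋃ x ∈ A, S x) < kuratowski A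

/-- `S : C → 2^X` is `k`-set-contractive if `γ(S(A)) ≤ k·γ(A)` for every `A ⊆ C`
with `γ(A) > 0`. -/
def SetContractive {X : Type*} [PseudoEMetricSpace X] (k : ℝ≥0∞) (C : Set X) (S : X → Set X) :
    Prop :=
  ∀ A ⊆ C, 0 < kuratowski A → kuratowski (⋃ x ∈ A, S x) ≤ k * kuratowski A

/-- `S` is almost lower semicontinuous on `C`: at every `x ∈ C` and every `ε > 0` there is a
neighborhood `U` of `x` in `C` with `⋂ z ∈ U, B(S(z); ε) ≠ ∅`. -/
def AlmostLSCOn {Z Y : Type*} [TopologicalSpace Z] [PseudoEMetricSpace Y] (C : Set Z)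
    (S : Z → Set Y) : Prop :=
  ∀ x ∈ C, ∀ ε : ℝ, 0 < ε → ∃ U ∈ 𝓝[C] x, (⋂ z ∈ U, Metric.thickening ε (S z)).Nonempty

/-- `S` is lower semicontinuous on `C`: for each `x ∈ C` and open `V` meeting `S x` there is a
neighborhood `U` of `x` in `C` such that `S z` meets `V` for all `z ∈ U`. -/
def LowerSemicontinuousCorrOn {Z Y : Type*} [TopologicalSpace Z] [TopologicalSpace Y]
    (C : Set Z) (S : Z → Set Y) : Prop :=
  ∀ x ∈ C, ∀ V : Set Y, IsOpen V → (S x ∩ V).Nonempty →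
    ∃ U ∈ 𝓝[C] x, ∀ z ∈ U, (S z ∩ V).Nonempty

/-- `T : Ω × C → 2^Y` is a random operator: for each `x ∈ C`, `ω ↦ T ω x` is (weakly)
measurable. -/
def RandomOperator {Ω X Y : Type*} [MeasurableSpace Ω] [TopologicalSpace Y] (C : Set X)
    (T : Ω → X → Set Y) : Prop :=
  ∀ x ∈ C, ∀ V : Set Y, IsOpen V → MeasurableSet {ω | (T ω x ∩ V).Nonempty}

/-- `T` has a random fixed point: a measurable `ξ : Ω → C` with `ξ ω ∈ T ω (ξ ω)` for all `ω`. -/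
def RandomFixedPoint {Ω X : Type*} [MeasurableSpace Ω] [MeasurableSpace X] (C : Set X)
    (T : Ω → X → Set X) : Prop :=
  ∃ ξ : Ω → X, Measurable ξ ∧ (∀ ω, ξ ω ∈ C) ∧ ∀ ω, ξ ω ∈ T ω (ξ ω)

/-- The inward set `I_C(x) = {x + r (y - x) : y ∈ C, r ≥ 0}`. -/
def inwardSet {X : Type*} [AddCommGroup X] [Module ℝ X] (C : Set X) (x : X) : Set X :=
  {z | ∃ y ∈ C, ∃ r : ℝ, 0 ≤ r ∧ z = x + r • (y - x)}

/-- Condition `𝓜`: whenever `ξ n, η n : Ω → C` are measurable with `η n ω ∈ T ω (ξ n ω)` for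
all `n, ω` and `ξ n ω - η n ω → 0` for each `ω`, then `T` has a random fixed point. -/
def ConditionM {Ω X : Type*} [MeasurableSpace Ω] [MeasurableSpace X] [NormedAddCommGroup X]
    (C : Set X) (T : Ω → X → Set X) : Prop :=
  ∀ ξ η : ℕ → Ω → X,
    (∀ n, Measurable (ξ n)) → (∀ n, Measurable (η n)) →
    (∀ n ω, ξ n ω ∈ C) → (∀ n ω, η n ω ∈ C) →
    (∀ n ω, η n ω ∈ T ω (ξ n ω)) →
    (∀ ω, Tendsto (fun n => ξ n ω - η n ω) atTop (𝓝 0)) →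
    RandomFixedPoint C T

/-- `S : C → 2^X` is hemicompact: each sequence `x n` in `C` with
`d(x n, S (x n)) → 0` has a convergent subsequence. -/
def Hemicompact {X : Type*} [MetricSpace X] (C : Set X) (S : X → Set X) : Prop :=
  ∀ x : ℕ → X, (∀ n, x n ∈ C) →
    Tendsto (fun n => Metric.infDist (x n) (S (x n))) atTop (𝓝 0) →
    ∃ φ : ℕ → ℕ, StrictMono φ ∧ ∃ l : X, Tendsto (fun n => x (φ n)) atTop (𝓝 l)

/-- If `x n ∈ C` converge to `l ∈ C` and `infEdist (x n) (T ω (x n)) → 0`, then `l` is a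
fixed point of `T ω`. -/
lemma aux_lim_mem {Ω X : Type*} [MetricSpace X] {C : Set X} {T : Ω → X → Set X}
    (hcl : ∀ ω, ∀ x ∈ C, IsClosed (T ω x))
    (hcont : ∀ ω, ∀ x ∈ C,
      Tendsto (fun z => EMetric.hausdorffEdist (T ω z) (T ω x)) (𝓝[C] x) (𝓝 0))
    (ω : Ω) {x : ℕ → X} {l : X} (hxC : ∀ n, x n ∈ C) (hlC : l ∈ C)
    (hx : Tendsto x atTop (𝓝 l))
    (hg : Tendsto (fun n => EMetric.infEdist (x n) (T ω (x n))) atTop (𝓝 0)) :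
    l ∈ T ω l := by
  have hH : Tendsto (fun n => EMetric.hausdorffEdist (T ω (x n)) (T ω l)) atTop (𝓝 0) :=
    (hcont ω l hlC).comp
      (tendsto_nhdsWithin_of_tendsto_nhds_of_eventually_within x hx
        (Eventually.of_forall hxC))
  have hed : Tendsto (fun n => edist l (x n)) atTop (𝓝 0) := by
    have := ((tendsto_const_nhds : Tendsto (fun _ : ℕ => l) atTop (𝓝 l)).edist hx)
    simpa using this
  have hbound : ∀ n, EMetric.infEdist l (T ω l) ≤
      edist l (x n) + EMetric.infEdist (x n) (T ω (x n))
        + EMetric.hausdorffEdist (T ω (x n)) (T ω l) := by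
    intro n
    calc EMetric.infEdist l (T ω l)
        ≤ EMetric.infEdist l (T ω (x n)) + EMetric.hausdorffEdist (T ω (x n)) (T ω l) :=
          EMetric.infEdist_le_infEdist_add_hausdorffEdist
      _ ≤ (EMetric.infEdist (x n) (T ω (x n)) + edist l (x n))
            + EMetric.hausdorffEdist (T ω (x n)) (T ω l) := by
          gcongr
          exact EMetric.infEdist_le_infEdist_add_edist
      _ = _ := by ring
  have hzero : EMetric.infEdist l (T ω l) ≤ 0 := by
    have hsum : Tendsto (fun n => edist l (x n) + EMetric.infEdist (x n) (T ω (x n))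
        + EMetric.hausdorffEdist (T ω (x n)) (T ω l)) atTop (𝓝 0) := by
      have := (hed.add hg).add hH
      simpa using this
    exact ge_of_tendsto hsum (Eventually.of_forall hbound)
  exact (EMetric.mem_iff_infEdist_zero_of_closed (hcl ω l hlC)).2 (le_antisymm hzero bot_le)

lemma aux_step1 {Ω X : Type*} [MeasurableSpace Ω] [MetricSpace X] {C : Set X}
    {T : Ω → X → Set X}
    (hC_closed : IsClosed C) (hC_sep : TopologicalSpace.IsSeparable C)
    (hrand : ∀ x ∈ C, ∀ V : Set X, IsOpen V → MeasurableSet {ω | (T ω x ∩ V).Nonempty})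
    (hcl : ∀ ω, ∀ x ∈ C, IsClosed (T ω x))
    (hcont : ∀ ω, ∀ x ∈ C,
      Tendsto (fun z => EMetric.hausdorffEdist (T ω z) (T ω x)) (𝓝[C] x) (𝓝 0))
    (hhemi : ∀ ω, ∀ x : ℕ → X, (∀ n, x n ∈ C) →
      Tendsto (fun n => Metric.infDist (x n) (T ω (x n))) atTop (𝓝 0) →
      ∃ φ : ℕ → ℕ, StrictMono φ ∧ ∃ l : X, Tendsto (fun n => x (φ n)) atTop (𝓝 l))
    (y : X) (r : ℝ) :
    MeasurableSet {ω | ∃ x, x ∈ C ∧ x ∈ T ω x ∧ x ∈ Metric.closedBall y r} := by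
  rcases (C ∩ Metric.closedBall y r).eq_empty_or_nonempty with hK | hK
  · convert MeasurableSet.empty
    ext ω
    simp only [mem_setOf_eq, mem_empty_iff_false, iff_false, not_exists]
    rintro x ⟨hxC, -, hxB⟩
    exact absurd (mem_inter hxC hxB) (by simp [hK])
  · haveI : TopologicalSpace.SeparableSpace ↥(C ∩ Metric.closedBall y r) :=
      (hC_sep.mono inter_subset_left).separableSpace
    haveI : Nonempty ↥(C ∩ Metric.closedBall y r) := hK.to_subtype
    set E : ℕ → X := fun k => (TopologicalSpace.denseSeq ↥(C ∩ Metric.closedBall y r) k : X)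
      with hE
    have hEK : ∀ k, E k ∈ C ∩ Metric.closedBall y r := fun k =>
      (TopologicalSpace.denseSeq ↥(C ∩ Metric.closedBall y r) k).2
    have hdense : ∀ x ∈ C ∩ Metric.closedBall y r, ∀ U : Set X, IsOpen U → x ∈ U →
        ∃ k, E k ∈ U := by
      intro x hx U hU hxU
      have hD : DenseRange (TopologicalSpace.denseSeq ↥(C ∩ Metric.closedBall y r)) :=
        TopologicalSpace.denseRange_denseSeq _
      obtain ⟨k, hk⟩ := hD.exists_mem_open (isOpen_induced hU (f := Subtype.val))
        ⟨⟨x, hx⟩, by simpa using hxU⟩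
      exact ⟨k, by simpa using hk⟩
    set ε : ℕ → ℝ≥0∞ := fun m => ENNReal.ofReal (1 / (m + 1)) with hε
    have hεpos : ∀ m, 0 < ε m := fun m => ENNReal.ofReal_pos.2 (by positivity)
    have hset : {ω | ∃ x, x ∈ C ∧ x ∈ T ω x ∧ x ∈ Metric.closedBall y r} =
        ⋂ m, ⋃ k, {ω | (T ω (E k) ∩ EMetric.ball (E k) (ε m)).Nonempty} := by
      ext ω
      simp only [mem_setOf_eq, mem_iInter, mem_iUnion]
      constructor
      · rintro ⟨x, hxC, hxT, hxB⟩ m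
        set δ := ε m / 2 with hδ
        have hδpos : 0 < δ := ENNReal.half_pos (hεpos m).ne'
        have h1 : ∀ᶠ z in 𝓝[C] x, EMetric.hausdorffEdist (T ω z) (T ω x) < δ :=
          (hcont ω x hxC).eventually (Filter.Tendsto.eventually_lt_const hδpos tendsto_id)
        have h2 : ∀ᶠ z in 𝓝[C] x, edist z x < δ :=
          mem_nhdsWithin_of_mem_nhds
            (EMetric.ball_mem_nhds x hδpos)
        obtain ⟨U, hUopen, hxU, hU⟩ := mem_nhdsWithin.1 (h1.and h2)
        obtain ⟨k, hkU⟩ := hdense x ⟨hxC, hxB⟩ U hUopen hxU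
        obtain ⟨hHk, hek⟩ := hU ⟨hkU, (hEK k).1⟩
        have hlt : EMetric.infEdist (E k) (T ω (E k)) < ε m := by
          calc EMetric.infEdist (E k) (T ω (E k))
              ≤ EMetric.infEdist (E k) (T ω x) + EMetric.hausdorffEdist (T ω x) (T ω (E k)) :=
                EMetric.infEdist_le_infEdist_add_hausdorffEdist
            _ ≤ (EMetric.infEdist x (T ω x) + edist (E k) x)
                  + EMetric.hausdorffEdist (T ω x) (T ω (E k)) := by
                gcongr; exact EMetric.infEdist_le_infEdist_add_edist
            _ = edist (E k) x + EMetric.hausdorffEdist (T ω (E k)) (T ω x) := by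
                rw [show EMetric.infEdist x (T ω x) = 0 from EMetric.infEdist_zero_of_mem hxT,
                  show EMetric.hausdorffEdist (T ω x) (T ω (E k)) =
                    EMetric.hausdorffEdist (T ω (E k)) (T ω x) from EMetric.hausdorffEdist_comm,
                  zero_add]
            _ < δ + δ := ENNReal.add_lt_add hek hHk
            _ = ε m := ENNReal.add_halves _
        obtain ⟨z, hz1, hz2⟩ := EMetric.infEdist_lt_iff.1 hlt
        exact ⟨k, z, hz1, by rw [edist_comm] at hz2; exact hz2⟩
      · intro h
        choose κ hκ using h
        set x : ℕ → X := fun m => E (κ m) with hx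
        have hxg : ∀ m, EMetric.infEdist (x m) (T ω (x m)) < ε m := by
          intro m
          obtain ⟨z, hz1, hz2⟩ := hκ m
          exact lt_of_le_of_lt (EMetric.infEdist_le_edist_of_mem hz1)
            (by rwa [edist_comm, ← EMetric.mem_ball])
        have hxC : ∀ m, x m ∈ C := fun m => (hEK (κ m)).1
        have hid : Tendsto (fun m => Metric.infDist (x m) (T ω (x m))) atTop (𝓝 0) := by
          apply squeeze_zero (fun m => Metric.infDist_nonneg)
            (g := fun m : ℕ => 1 / (m + 1)) _ tendsto_one_div_add_atTop_nhds_zero_nat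
          intro m
          rw [Metric.infDist]
          calc (EMetric.infEdist (x m) (T ω (x m))).toReal ≤ (ε m).toReal :=
                ENNReal.toReal_mono ENNReal.ofReal_ne_top (hxg m).le
            _ = 1 / (m + 1) := ENNReal.toReal_ofReal (by positivity)
        obtain ⟨φ, hφ, l, hl⟩ := hhemi ω x hxC hid
        have hlC : l ∈ C := hC_closed.mem_of_tendsto hl (Eventually.of_forall fun m => hxC _)
        have hlB : l ∈ Metric.closedBall y r :=
          Metric.isClosed_closedBall.mem_of_tendsto hl (Eventually.of_forall fun m => (hEK _).2)
        have hg0 : Tendsto (fun m => EMetric.infEdist (x (φ m)) (T ω (x (φ m)))) atTop (𝓝 0) := by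
          have hub : Tendsto (fun m : ℕ => ENNReal.ofReal (1 / (m + 1))) atTop (𝓝 0) := by
            simpa using ENNReal.tendsto_ofReal
              (tendsto_one_div_add_atTop_nhds_zero_nat)
          refine tendsto_of_tendsto_of_tendsto_of_le_of_le tendsto_const_nhds hub
            (fun m => zero_le) (fun m => ?_)
          refine (hxg (φ m)).le.trans (ENNReal.ofReal_le_ofReal ?_)
          have h1 : (m : ℝ) + 1 ≤ (φ m : ℝ) + 1 := by
            have h2 : m ≤ φ m := hφ.le_apply
            have := (Nat.cast_le (α := ℝ)).2 h2
            linarith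
          exact one_div_le_one_div_of_le (by positivity) h1
        have := aux_lim_mem hcl hcont ω (fun m => hxC (φ m)) hlC hl hg0
        exact ⟨l, hlC, this, hlB⟩
    rw [hset]
    exact MeasurableSet.iInter fun m => MeasurableSet.iUnion fun k =>
      hrand (E k) (hEK k).1 _ EMetric.isOpen_ball

lemma aux_meas_find {Ω : Type*} [MeasurableSpace Ω] {p : Ω → ℕ → Prop}
    (hp : ∀ i, MeasurableSet {ω | p ω i}) {f : Ω → ℕ}
    (hf : ∀ ω i, f ω = i ↔ (p ω i ∧ ∀ j < i, ¬ p ω j) ∨ (i = 0 ∧ ∀ j, ¬ p ω j)) :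
    Measurable f := by
  apply measurable_to_countable'
  intro i
  by_cases hi : i = 0
  · subst hi
    have h0 : f ⁻¹' {0} = {ω | p ω 0} ∪ ⋂ j, {ω | p ω j}ᶜ := by
      ext ω
      simp only [mem_preimage, mem_singleton_iff, hf ω 0, mem_union, mem_setOf_eq, mem_iInter,
        mem_compl_iff]
      constructor
      · rintro (⟨h, -⟩ | ⟨-, h⟩)
        · exact Or.inl h
        · exact Or.inr h
      · rintro (h | h)
        · exact Or.inl ⟨h, by omega⟩
        · exact Or.inr ⟨trivial, h⟩
    rw [h0]
    exact (hp 0).union (MeasurableSet.iInter fun j => (hp j).compl)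
  · have h0 : f ⁻¹' {i} = {ω | p ω i} ∩ ⋂ j, ⋂ _h : j < i, {ω | p ω j}ᶜ := by
      ext ω
      simp only [mem_preimage, mem_singleton_iff, hf ω i, mem_inter_iff, mem_setOf_eq, mem_iInter,
        mem_compl_iff]
      constructor
      · rintro (⟨h1, h2⟩ | ⟨h1, -⟩)
        · exact ⟨h1, h2⟩
        · exact absurd h1 hi
      · rintro ⟨h1, h2⟩
        exact Or.inl ⟨h1, h2⟩
    rw [h0]
    exact (hp i).inter (MeasurableSet.iInter fun j => MeasurableSet.iInter fun _ => (hp j).compl)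

theorem stmt_12 {Ω X : Type*} [MeasurableSpace Ω] [MetricSpace X] [CompleteSpace X]
    [MeasurableSpace X] [BorelSpace X]
    (C : Set X) (hC_closed : IsClosed C) (hC_sep : TopologicalSpace.IsSeparable C)
    (T : Ω → X → Set X)
    (hrand : RandomOperator C T)
    (hne : ∀ ω, ∀ x ∈ C, (T ω x).Nonempty)
    (hcl : ∀ ω, ∀ x ∈ C, IsClosed (T ω x))
    (hcont : ∀ ω, ∀ x ∈ C,
      Tendsto (fun z => EMetric.hausdorffEdist (T ω z) (T ω x)) (𝓝[C] x) (𝓝 0))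
    (hhemi : ∀ ω, Hemicompact C (T ω))
    (hFne : ∀ ω, ∃ x ∈ C, x ∈ T ω x) :
    RandomFixedPoint C T := by
  classical
  rcases isEmpty_or_nonempty Ω with hΩ | hΩ
  · refine ⟨fun ω => isEmptyElim ω, Subsingleton.measurable, fun ω => isEmptyElim ω,
      fun ω => isEmptyElim ω⟩
  obtain ⟨ω0⟩ := hΩ
  obtain ⟨x0, hx0, -⟩ := hFne ω0
  haveI : TopologicalSpace.SeparableSpace ↥C := hC_sep.separableSpace
  haveI : Nonempty ↥C := ⟨⟨x0, hx0⟩⟩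
  set D : ℕ → X := fun n => (TopologicalSpace.denseSeq ↥C n : X) with hD
  have hDC : ∀ n, D n ∈ C := fun n => (TopologicalSpace.denseSeq ↥C n).2
  have hDdense : ∀ x ∈ C, ∀ ε : ℝ, 0 < ε → ∃ n, dist x (D n) < ε := by
    intro x hx ε hε
    have hdr : DenseRange (TopologicalSpace.denseSeq ↥C) :=
      TopologicalSpace.denseRange_denseSeq _
    obtain ⟨n, hn⟩ := hdr.exists_mem_open
      (isOpen_induced (Metric.isOpen_ball (x := x) (ε := ε)) (f := Subtype.val))
      ⟨⟨x, hx⟩, by simpa [Metric.mem_ball] using hε⟩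
    exact ⟨n, by simpa [Metric.mem_ball, dist_comm] using hn⟩
  set P : ℕ → Ω → ℕ → Prop := fun n ω i =>
    ∃ x, x ∈ C ∧ x ∈ T ω x ∧ x ∈ Metric.closedBall (D i) ((1/2) ^ n) with hP
  have hPmeas : ∀ n i, MeasurableSet {ω | P n ω i} := fun n i =>
    aux_step1 hC_closed hC_sep hrand hcl hcont hhemi (D i) _
  have hexP : ∀ n ω x, x ∈ C → x ∈ T ω x → ∃ i, P n ω i ∧ dist x (D i) < (1/2) ^ n := by
    intro n ω x hxC hxT
    obtain ⟨i, hi⟩ := hDdense x hxC ((1/2) ^ n) (by positivity)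
    exact ⟨i, ⟨x, hxC, hxT, Metric.mem_closedBall.2 hi.le⟩, hi⟩
  have hex0 : ∀ ω, ∃ i, P 0 ω i := fun ω => by
    obtain ⟨x, hxC, hxT⟩ := hFne ω
    obtain ⟨i, hi, -⟩ := hexP 0 ω x hxC hxT
    exact ⟨i, hi⟩
  set Q : ℕ → ℕ → Ω → ℕ → Prop := fun n j ω i =>
    P (n+1) ω i ∧ dist (D i) (D j) < (1/2) ^ n + (1/2) ^ (n+1) with hQ
  set I : ℕ → Ω → ℕ := fun n => Nat.rec (fun ω => Nat.find (hex0 ω))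
    (fun n In ω => if h : ∃ i, Q n (In ω) ω i then Nat.find h else 0) n with hI
  have hI0 : ∀ ω, I 0 ω = Nat.find (hex0 ω) := fun ω => rfl
  have hIsucc : ∀ n ω, I (n+1) ω =
      if h : ∃ i, Q n (I n ω) ω i then Nat.find h else 0 := fun n ω => rfl
  have hEx : ∀ n ω, P n ω (I n ω) → ∃ i, Q n (I n ω) ω i := by
    intro n ω hp
    obtain ⟨x, hxC, hxT, hxB⟩ := hp
    obtain ⟨i, hPi, hdi⟩ := hexP (n+1) ω x hxC hxT
    refine ⟨i, hPi, ?_⟩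
    have h1 : dist (D i) (D (I n ω)) ≤ dist (D i) x + dist x (D (I n ω)) := dist_triangle _ _ _
    have h2 : dist x (D (I n ω)) ≤ (1/2) ^ n := Metric.mem_closedBall.1 hxB
    rw [dist_comm] at hdi
    linarith
  have hinv : ∀ n ω, P n ω (I n ω) := by
    intro n
    induction n with
    | zero => intro ω; exact Nat.find_spec (hex0 ω)
    | succ n ih =>
      intro ω
      have h := hEx n ω (ih ω)
      have : I (n+1) ω = Nat.find h := by rw [hIsucc n ω, dif_pos h]
      rw [this]
      exact (Nat.find_spec h).1
  have hstep : ∀ n ω, dist (D (I (n+1) ω)) (D (I n ω)) < (1/2) ^ n + (1/2) ^ (n+1) := by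
    intro n ω
    have h := hEx n ω (hinv n ω)
    have : I (n+1) ω = Nat.find h := by rw [hIsucc n ω, dif_pos h]
    rw [this]
    exact (Nat.find_spec h).2
  have hImeas : ∀ n, Measurable (I n) := by
    intro n
    induction n with
    | zero =>
      refine aux_meas_find (hPmeas 0) (fun ω i => ?_)
      rw [hI0 ω, Nat.find_eq_iff (hex0 ω)]
      constructor
      · exact fun h => Or.inl h
      · rintro (h | ⟨-, h⟩)
        · exact h
        · exact absurd (hex0 ω) (by push_neg; exact fun i => h i)
    | succ n ih =>
      have hq : ∀ i, MeasurableSet {ω | Q n (I n ω) ω i} := by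
        intro i
        have : {ω | Q n (I n ω) ω i} = {ω | P (n+1) ω i} ∩
            I n ⁻¹' {j | dist (D i) (D j) < (1/2) ^ n + (1/2) ^ (n+1)} := by
          ext ω; simp [hQ]
        rw [this]
        exact (hPmeas (n+1) i).inter (ih (MeasurableSet.of_discrete))
      refine aux_meas_find hq (fun ω i => ?_)
      rw [hIsucc n ω]
      by_cases h : ∃ i, Q n (I n ω) ω i
      · rw [dif_pos h, Nat.find_eq_iff h]
        constructor
        · exact fun h' => Or.inl h'
        · rintro (h' | ⟨-, h'⟩)
          · exact h'
          · exact absurd h (by push_neg; exact fun i => h' i)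
      · rw [dif_neg h]
        push_neg at h
        constructor
        · rintro rfl
          exact Or.inr ⟨rfl, fun j => h j⟩
        · rintro (⟨h1, -⟩ | ⟨h0, -⟩)
          · exact absurd h1 (h i)
          · exact h0.symm
  set ξ : ℕ → Ω → X := fun n ω => D (I n ω) with hξ
  have hξmeas : ∀ n, Measurable (ξ n) := fun n => (measurable_from_top (f := D)).comp (hImeas n)
  have hdistbound : ∀ ω n, dist (ξ n ω) (ξ (n+1) ω) ≤ 2 * (1/2) ^ n := by
    intro ω n
    rw [dist_comm]
    have h := (hstep n ω).le
    have h2 : ((1:ℝ)/2) ^ (n+1) ≤ (1/2) ^ n := by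
      rw [pow_succ]
      nlinarith [pow_pos (by norm_num : (0:ℝ) < 1/2) n]
    calc dist (D (I (n+1) ω)) (D (I n ω)) ≤ (1/2) ^ n + (1/2) ^ (n+1) := h
      _ ≤ 2 * (1/2) ^ n := by linarith
  have hlim : ∀ ω, ∃ l, Tendsto (fun n => ξ n ω) atTop (𝓝 l) := fun ω =>
    cauchySeq_tendsto_of_complete
      (cauchySeq_of_le_geometric (1/2) 2 (by norm_num) (hdistbound ω))
  choose ξ' hξ' using hlim
  have hξ'meas : Measurable ξ' :=
    measurable_of_tendsto_metrizable hξmeas (tendsto_pi_nhds.2 hξ')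
  have hξ'C : ∀ ω, ξ' ω ∈ C := fun ω =>
    hC_closed.mem_of_tendsto (hξ' ω) (Eventually.of_forall fun n => hDC _)
  refine ⟨ξ', hξ'meas, hξ'C, fun ω => ?_⟩
  have hy : ∀ n, ∃ x, x ∈ C ∧ x ∈ T ω x ∧ dist x (ξ n ω) ≤ (1/2) ^ n := by
    intro n
    obtain ⟨x, h1, h2, h3⟩ := hinv n ω
    exact ⟨x, h1, h2, Metric.mem_closedBall.1 h3⟩
  choose y hy1 hy2 hy3 using hy
  have hytend : Tendsto y atTop (𝓝 (ξ' ω)) := by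
    rw [tendsto_iff_dist_tendsto_zero]
    apply squeeze_zero (fun n => dist_nonneg)
      (g := fun n => (1/2) ^ n + dist (ξ n ω) (ξ' ω))
    · intro n
      calc dist (y n) (ξ' ω) ≤ dist (y n) (ξ n ω) + dist (ξ n ω) (ξ' ω) := dist_triangle _ _ _
        _ ≤ (1/2) ^ n + dist (ξ n ω) (ξ' ω) := by gcongr; exact hy3 n
    · have h1 : Tendsto (fun n : ℕ => ((1:ℝ)/2) ^ n) atTop (𝓝 0) :=
        tendsto_pow_atTop_nhds_zero_of_lt_one (by norm_num) (by norm_num)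
      have h2 := tendsto_iff_dist_tendsto_zero.1 (hξ' ω)
      simpa using h1.add h2
  have hg0 : Tendsto (fun n => EMetric.infEdist (y n) (T ω (y n))) atTop (𝓝 0) := by
    have : (fun n => EMetric.infEdist (y n) (T ω (y n))) = fun _ => 0 :=
      funext fun n => EMetric.infEdist_zero_of_mem (hy2 n)
    rw [this]
    exact tendsto_const_nhds
  exact aux_lim_mem hcl hcont ω hy1 (hξ'C ω) hytend hg0
end

section
/- Let X be a nonempty, closed and convex subset of a Banach space E. If T : X → 2^X is condensing, then there exists a nonempty, compact and convex subset K of X such that T(x) ⊆ K for each x ∈ K. -/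
open Metric Set Filter Topology Pointwise
open scoped ENNReal

section KuratowskiLemmas

open Bornology

lemma kuratowski_mono {Y : Type*} [PseudoEMetricSpace Y] {A B : Set Y} (h : A ⊆ B) :
    kuratowski A ≤ kuratowski B :=
  sInf_le_sInf fun _ ⟨cov, hc, hd⟩ => ⟨cov, h.trans hc, hd⟩

lemma kuratowski_union_singleton_le {Y : Type*} [PseudoEMetricSpace Y] (A : Set Y) (x : Y) :
    kuratowski (A ∪ {x}) ≤ kuratowski A := by
  classical
  refine sInf_le_sInf fun e ⟨cov, hc, hd⟩ => ⟨insert {x} cov, ?_, ?_⟩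
  · refine Set.union_subset (hc.trans ?_) ?_
    · exact Set.iUnion₂_mono' fun s hs => ⟨s, Finset.mem_insert_of_mem hs, subset_rfl⟩
    · exact Set.subset_iUnion₂_of_subset {x} (Finset.mem_insert_self _ _) subset_rfl
  · intro s hs
    rcases Finset.mem_insert.1 hs with rfl | hs
    · exact (Metric.ediam_singleton (x := x)).le.trans zero_le
    · exact hd s hs

lemma kuratowski_closure_le {Y : Type*} [PseudoEMetricSpace Y] (A : Set Y) :
    kuratowski (closure A) ≤ kuratowski A := by
  classical
  refine sInf_le_sInf fun e ⟨cov, hc, hd⟩ => ⟨cov.image closure, ?_, ?_⟩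
  · have h1 : A ⊆ ⋃ s ∈ cov, closure s :=
      hc.trans (Set.iUnion₂_mono fun s _ => subset_closure)
    have h2 : IsClosed (⋃ s ∈ cov, closure s) :=
      cov.finite_toSet.isClosed_biUnion fun s _ => isClosed_closure
    refine (h2.closure_subset_iff.2 h1).trans ?_
    intro y hy
    rcases Set.mem_iUnion₂.1 hy with ⟨s, hs, hys⟩
    exact Set.mem_iUnion₂.2 ⟨closure s, Finset.mem_image_of_mem _ hs, hys⟩
  · intro s hs
    rcases Finset.mem_image.1 hs with ⟨t, ht, rfl⟩
    change Metric.ediam _ ≤ e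
    rw [EMetric.diam_closure]
    exact hd t ht

lemma kuratowski_eq_zero_totallyBounded {Y : Type*} [PseudoEMetricSpace Y] {A : Set Y}
    (h : kuratowski A = 0) : TotallyBounded A := by
  classical
  rw [EMetric.totallyBounded_iff]
  intro ε εpos
  have hlt : kuratowski A < ε := h ▸ εpos
  obtain ⟨e, ⟨cov, hc, hd⟩, he⟩ := sInf_lt_iff.1 hlt
  refine ⟨⋃ s ∈ cov, (fun s : Set Y => if hs : s.Nonempty then {hs.choose} else ∅) s, ?_, ?_⟩
  · exact cov.finite_toSet.biUnion fun s _ => by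
      split <;> simp [Set.finite_singleton]
  · intro x hx
    rcases Set.mem_iUnion₂.1 (hc hx) with ⟨s, hs, hxs⟩
    have hsne : s.Nonempty := ⟨x, hxs⟩
    refine Set.mem_iUnion₂.2 ⟨hsne.choose, ?_, ?_⟩
    · exact Set.mem_iUnion₂.2 ⟨s, hs, by simp [hsne]⟩
    · exact lt_of_le_of_lt
        (le_trans (EMetric.edist_le_diam_of_mem hxs hsne.choose_spec) (hd s hs)) he

lemma kuratowski_convexHull_le {F : Type*} [NormedAddCommGroup F] [NormedSpace ℝ F]
    (A : Set F) : kuratowski (convexHull ℝ A) ≤ kuratowski A := by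
  classical
  refine le_sInf fun e he => ?_
  obtain ⟨cov, hcin, hdiam⟩ := he
  rcases eq_or_ne e ⊤ with rfl | hetop
  · exact le_top
  rcases A.eq_empty_or_nonempty with rfl | hA
  · rw [convexHull_empty]
    exact sInf_le ⟨∅, by simp, by simp⟩
  refine ENNReal.le_of_forall_pos_le_add fun ε εpos _ => ?_
  -- index type: sets of the cover meeting A
  set cov' : Finset (Set F) := cov.filter (fun s => (s ∩ A).Nonempty) with hcov'
  set ι := {s : Set F // s ∈ cov'} with hι
  have memc : ∀ i : ι, (i : Set F) ∈ cov ∧ ((i : Set F) ∩ A).Nonempty := by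
    rintro ⟨s, hs⟩
    exact Finset.mem_filter.1 hs
  set C : ι → Set F := fun i => convexHull ℝ ((i : Set F) ∩ A) with hC
  have hCne : ∀ i, (C i).Nonempty := fun i =>
    (memc i).2.mono (subset_convexHull ℝ _)
  have hCconv : ∀ i, Convex ℝ (C i) := fun i => convex_convexHull ℝ _
  have hCdiam : ∀ i, EMetric.diam (C i) ≤ e := by
    intro i
    rw [hC]
    change Metric.ediam (convexHull ℝ _) ≤ e
    rw [convexHull_ediam]
    exact le_trans (EMetric.diam_mono Set.inter_subset_left) (hdiam _ (memc i).1)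
  have hAC : A ⊆ ⋃ i, C i := by
    intro a ha
    rcases Set.mem_iUnion₂.1 (hcin ha) with ⟨s, hs, has⟩
    have hs' : s ∈ cov' := Finset.mem_filter.2 ⟨hs, ⟨a, has, ha⟩⟩
    exact Set.mem_iUnion.2 ⟨⟨s, hs'⟩, subset_convexHull ℝ _ ⟨has, ha⟩⟩
  -- a common bound on norms
  have hCbdd : ∀ i, IsBounded (C i) := by
    intro i
    rw [Metric.isBounded_iff_ediam_ne_top]
    exact fun ht => hetop (top_le_iff.1 (ht ▸ hCdiam i))
  have hBddU : IsBounded (⋃ i, C i) := isBounded_iUnion.2 fun i => hCbdd i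
  obtain ⟨R₀, hR₀⟩ := (Metric.isBounded_iff_subset_closedBall 0).1 hBddU
  set R : ℝ := max R₀ 1 with hRdef
  have hR1 : (1 : ℝ) ≤ R := le_max_right _ _
  have hR0 : (0 : ℝ) < R := lt_of_lt_of_le one_pos hR1
  have hRnorm : ∀ i, ∀ x ∈ C i, ‖x‖ ≤ R := by
    intro i x hx
    have : x ∈ Metric.closedBall 0 R₀ := hR₀ (Set.mem_iUnion.2 ⟨i, hx⟩)
    rw [Metric.mem_closedBall, dist_zero_right] at this
    exact this.trans (le_max_left _ _)
  -- arbitrary points of the C i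
  have hc : ∀ i, (hCne i).choose ∈ C i := fun i => (hCne i).choose_spec
  set c : ι → F := fun i => (hCne i).choose with hcdef
  -- the convex set D
  set D : Set F := {y : F | ∃ w ∈ stdSimplex ℝ ι, ∃ x : ι → F,
      (∀ i, x i ∈ C i) ∧ y = ∑ i, w i • x i} with hD
  have hDconv : Convex ℝ D := by
    rintro p ⟨w, hw, x, hx, rfl⟩ q ⟨v, hv, y, hy, rfl⟩ a b ha hb hab
    set u : ι → ℝ := fun i => a * w i + b * v i with hu
    have hunn : ∀ i, 0 ≤ u i := fun i =>
      add_nonneg (mul_nonneg ha (hw.1 i)) (mul_nonneg hb (hv.1 i))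
    have husum : ∑ i, u i = 1 := by
      simp only [hu, Finset.sum_add_distrib, ← Finset.mul_sum, hw.2, hv.2, mul_one, hab]
    set z : ι → F := fun i =>
      if h : u i = 0 then c i else (a * w i / u i) • x i + (b * v i / u i) • y i with hz
    have hzmem : ∀ i, z i ∈ C i := by
      intro i
      rw [hz]
      dsimp only
      split
      · exact hc i
      · next h =>
          refine (hCconv i) (hx i) (hy i) (div_nonneg (mul_nonneg ha (hw.1 i)) (hunn i))
            (div_nonneg (mul_nonneg hb (hv.1 i)) (hunn i)) ?_
          have huu : a * w i + b * v i = u i := rfl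
          rw [← add_div, huu]
          exact div_self h
    have key : ∀ i, u i • z i = (a * w i) • x i + (b * v i) • y i := by
      intro i
      rw [hz]
      dsimp only
      split
      · next h =>
          have h2 : a * w i = 0 ∧ b * v i = 0 := by
            rw [← add_eq_zero_iff_of_nonneg (mul_nonneg ha (hw.1 i)) (mul_nonneg hb (hv.1 i))]
            exact h
          rw [h, h2.1, h2.2]
          simp
      · next h =>
          rw [smul_add, smul_smul, smul_smul]
          congr 1
          · congr 1
            field_simp
          · congr 1
            field_simp
    refine ⟨u, ⟨hunn, husum⟩, z, hzmem, ?_⟩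
    rw [Finset.smul_sum, Finset.smul_sum, ← Finset.sum_add_distrib]
    refine Finset.sum_congr rfl fun i _ => ?_
    rw [key i, smul_smul, smul_smul]
  have hAD : A ⊆ D := by
    intro a ha
    rcases Set.mem_iUnion.1 (hAC ha) with ⟨i, hai⟩
    refine ⟨fun j => if j = i then 1 else 0, ⟨fun j => by positivity, by rw [Finset.sum_eq_single i (fun j _ hj => if_neg hj) (fun h => absurd (Finset.mem_univ i) h), if_pos rfl]⟩,
      fun j => if j = i then a else c j, fun j => ?_, ?_⟩
    · by_cases h : j = i
      · subst h; simp [hai]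
      · simp [h, hc j]; exact hc j
    · rw [Finset.sum_eq_single i]
      · simp
      · intro j _ hj; simp [hj]
      · intro h; exact absurd (Finset.mem_univ i) h
  have hcoAD : convexHull ℝ A ⊆ D := convexHull_min hAD hDconv
  -- ι is a nonempty fintype
  have : Nonempty ι := by
    rcases hA with ⟨a, ha⟩
    rcases Set.mem_iUnion.1 (hAC ha) with ⟨i, _⟩
    exact ⟨i⟩
  set n : ℕ := Fintype.card ι with hn
  set δ : ℝ := (ε : ℝ) / (2 * (n * R + 1)) with hδdef
  have hnR : (0 : ℝ) < n * R + 1 := by positivity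
  have hδpos : 0 < δ := by
    apply div_pos (by exact_mod_cast εpos) (by positivity)
  -- cover the simplex by a finite δ-net
  have hTB := (isCompact_stdSimplex ℝ ι).totallyBounded
  obtain ⟨Fnet, hFsub, hFfin, hFcov⟩ := totallyBounded_iff_subset.1 hTB
    {p : (ι → ℝ) × (ι → ℝ) | dist p.1 p.2 < δ} (dist_mem_uniformity hδpos)
  set S : (ι → ℝ) → Set F := fun μ =>
    {y : F | ∃ x : ι → F, (∀ i, x i ∈ C i) ∧ y = ∑ i, μ i • x i} with hS
  have hSdiam : ∀ μ ∈ Fnet, EMetric.diam (S μ) ≤ e := by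
    intro μ hμ
    have hμs : μ ∈ stdSimplex ℝ ι := hFsub hμ
    refine EMetric.diam_le ?_
    rintro p ⟨x, hx, rfl⟩ q ⟨y, hy, rfl⟩
    have hbound : dist (∑ i, μ i • x i) (∑ i, μ i • y i) ≤ e.toReal := by
      rw [dist_eq_norm, ← Finset.sum_sub_distrib]
      calc ‖∑ i, (μ i • x i - μ i • y i)‖ ≤ ∑ i, ‖μ i • x i - μ i • y i‖ :=
            norm_sum_le _ _
        _ ≤ ∑ i, μ i * e.toReal := by
            refine Finset.sum_le_sum fun i _ => ?_
            rw [← smul_sub, norm_smul, Real.norm_eq_abs, abs_of_nonneg (hμs.1 i)]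
            refine mul_le_mul_of_nonneg_left ?_ (hμs.1 i)
            have h1 : edist (x i) (y i) ≤ e :=
              le_trans (EMetric.edist_le_diam_of_mem (hx i) (hy i)) (hCdiam i)
            have h2 := ENNReal.toReal_mono hetop h1
            rwa [← dist_edist, dist_eq_norm] at h2
        _ = e.toReal := by rw [← Finset.sum_mul, hμs.2, one_mul]
    calc edist (∑ i, μ i • x i) (∑ i, μ i • y i)
        = ENNReal.ofReal (dist (∑ i, μ i • x i) (∑ i, μ i • y i)) := edist_dist _ _
      _ ≤ ENNReal.ofReal e.toReal := ENNReal.ofReal_le_ofReal hbound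
      _ = e := ENNReal.ofReal_toReal hetop
  set ε' : NNReal := ε / 2 with hε'
  have hε'pos : (0 : ℝ) < ε' := by
    have : (0 : NNReal) < ε / 2 := by positivity
    exact_mod_cast this
  have hcover : D ⊆ ⋃ μ ∈ Fnet, Metric.thickening (ε' : ℝ) (S μ) := by
    rintro y ⟨w, hw, x, hx, rfl⟩
    rcases Set.mem_iUnion₂.1 (hFcov hw) with ⟨μ, hμ, hwμ⟩
    have hwμ' : dist w μ < δ := hwμ
    refine Set.mem_iUnion₂.2 ⟨μ, hμ, ?_⟩
    rw [Metric.mem_thickening_iff]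
    refine ⟨∑ i, μ i • x i, ⟨x, hx, rfl⟩, ?_⟩
    have hstep : dist (∑ i, w i • x i) (∑ i, μ i • x i) ≤ n * (δ * R) := by
      rw [dist_eq_norm, ← Finset.sum_sub_distrib]
      calc ‖∑ i, (w i • x i - μ i • x i)‖ ≤ ∑ i, ‖w i • x i - μ i • x i‖ := norm_sum_le _ _
        _ ≤ ∑ _i : ι, δ * R := by
            refine Finset.sum_le_sum fun i _ => ?_
            rw [← sub_smul, norm_smul, Real.norm_eq_abs]
            refine mul_le_mul ?_ (hRnorm i _ (hx i)) (norm_nonneg _) hδpos.le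
            have := dist_le_pi_dist w μ i
            rw [Real.dist_eq] at this
            exact le_of_lt (lt_of_le_of_lt this hwμ')
        _ = n * (δ * R) := by
            rw [Finset.sum_const, Finset.card_univ, nsmul_eq_mul, hn]
    refine lt_of_le_of_lt hstep ?_
    have h1 : (n : ℝ) * (δ * R) < δ * (n * R + 1) := by
      have : (n : ℝ) * (δ * R) = δ * (n * R) := by ring
      rw [this]
      exact mul_lt_mul_of_pos_left (lt_add_one _) hδpos
    have h2 : δ * (n * R + 1) = (ε' : ℝ) := by
      rw [hδdef]
      have hε2 : (ε' : ℝ) = (ε : ℝ) / 2 := by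
        rw [hε']; push_cast; ring
      rw [hε2]
      field_simp
    rw [← h2]
    exact h1
  -- assemble the cover
  refine sInf_le ⟨hFfin.toFinset.image (fun μ => Metric.thickening (ε' : ℝ) (S μ)), ?_, ?_⟩
  · refine hcoAD.trans (hcover.trans ?_)
    intro y hy
    rcases Set.mem_iUnion₂.1 hy with ⟨μ, hμ, hyμ⟩
    exact Set.mem_iUnion₂.2 ⟨Metric.thickening (ε' : ℝ) (S μ),
      Finset.mem_image_of_mem _ (hFfin.mem_toFinset.2 hμ), hyμ⟩
  · intro s hs
    rcases Finset.mem_image.1 hs with ⟨μ, hμ, rfl⟩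
    have hμF : μ ∈ Fnet := hFfin.mem_toFinset.1 hμ
    calc EMetric.diam (Metric.thickening (ε' : ℝ) (S μ))
        ≤ EMetric.diam (S μ) + 2 * (ε' : ℝ≥0∞) := Metric.ediam_thickening_le ε'
      _ ≤ e + 2 * (ε' : ℝ≥0∞) := add_le_add_left (hSdiam μ hμF) _
      _ = e + ε := by
          congr 1
          rw [hε']
          rw [← ENNReal.coe_ofNat, ← ENNReal.coe_mul]
          congr 1
          rw [mul_comm]
          exact div_mul_cancel₀ ε (by norm_num)

end KuratowskiLemmas

theorem stmt_13 {E : Type*} [NormedAddCommGroup E] [NormedSpace ℝ E] [CompleteSpace E]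
    (X : Set E) (hne : X.Nonempty) (hcl : IsClosed X) (hconv : Convex ℝ X)
    (T : E → Set E) (hsub : ∀ x ∈ X, T x ⊆ X)
    (hcond : Condensing X T) :
    ∃ K : Set E, K ⊆ X ∧ K.Nonempty ∧ IsCompact K ∧ Convex ℝ K ∧ ∀ x ∈ K, T x ⊆ K := by
  obtain ⟨x₀, hx₀⟩ := hne
  set 𝒮 : Set (Set E) :=
    {D | D ⊆ X ∧ x₀ ∈ D ∧ IsClosed D ∧ Convex ℝ D ∧ ∀ x ∈ D, T x ⊆ D} with h𝒮
  have hX𝒮 : X ∈ 𝒮 := ⟨subset_rfl, hx₀, hcl, hconv, fun x hx => hsub x hx⟩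
  set K : Set E := ⋂₀ 𝒮 with hK
  have hKX : K ⊆ X := sInter_subset_of_mem hX𝒮
  have hx₀K : x₀ ∈ K := mem_sInter.2 fun D hD => hD.2.1
  have hKcl : IsClosed K := isClosed_sInter fun D hD => hD.2.2.1
  have hKconv : Convex ℝ K := convex_sInter fun D hD => hD.2.2.2.1
  have hKT : ∀ x ∈ K, T x ⊆ K := by
    intro x hx
    refine subset_sInter fun D hD => ?_
    exact hD.2.2.2.2 x (mem_sInter.1 hx D hD)
  set B : Set E := (⋃ x ∈ K, T x) ∪ {x₀} with hB
  set K₁ : Set E := closure (convexHull ℝ B) with hK₁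
  have hBK : B ⊆ K := by
    refine union_subset ?_ (singleton_subset_iff.2 hx₀K)
    exact iUnion₂_subset fun x hx => hKT x hx
  have hK₁K : K₁ ⊆ K := hKcl.closure_subset_iff.2 (convexHull_min hBK hKconv)
  have hK₁𝒮 : K₁ ∈ 𝒮 := by
    refine ⟨hK₁K.trans hKX,
      subset_closure (subset_convexHull ℝ _ (mem_union_right _ rfl)),
      isClosed_closure, (convex_convexHull ℝ B).closure, ?_⟩
    intro x hx
    have hxK : x ∈ K := hK₁K hx
    refine (fun y hy => ?_)
    have : y ∈ B := mem_union_left _ (mem_iUnion₂.2 ⟨x, hxK, hy⟩)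
    exact subset_closure (subset_convexHull ℝ _ this)
  have hKK₁ : K ⊆ K₁ := sInter_subset_of_mem hK₁𝒮
  have hchain : kuratowski K ≤ kuratowski (⋃ x ∈ K, T x) := by
    calc kuratowski K ≤ kuratowski K₁ := kuratowski_mono hKK₁
      _ ≤ kuratowski (convexHull ℝ B) := kuratowski_closure_le _
      _ ≤ kuratowski B := kuratowski_convexHull_le _
      _ ≤ kuratowski (⋃ x ∈ K, T x) := kuratowski_union_singleton_le _ _
  have hK0 : kuratowski K = 0 := by
    by_contra h
    have hpos : 0 < kuratowski K := pos_iff_ne_zero.2 h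
    have := hcond K hKX hpos
    exact absurd (hchain.trans_lt this) (lt_irrefl _)
  have hTB : TotallyBounded K := kuratowski_eq_zero_totallyBounded hK0
  have hKcpt : IsCompact K := TotallyBounded.isCompact_of_isClosed hTB hKcl
  exact ⟨K, hKX, ⟨x₀, hx₀K⟩, hKcpt, hKconv, hKT⟩
end

section
/- Let X be a paracompact topological space, Y a normed vector space, and T : X → 2^Y a correspondence with convex values. Then T is almost lower semicontinuous if and only if for each ε > 0, T admits a continuous ε-approximate selection, i.e. a continuous single-valued function f : X → Y such that f(x) ∈ B(T(x); ε) for each x ∈ X. -/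
open Metric Set Filter Topology Pointwise
open scoped ENNReal

/-- `S` is almost lower semicontinuous (at every point of the whole space). -/
def AlmostLSC {Z Y : Type*} [TopologicalSpace Z] [PseudoEMetricSpace Y] (S : Z → Set Y) : Prop :=
  ∀ x : Z, ∀ ε : ℝ, 0 < ε → ∃ U ∈ 𝓝 x, (⋂ z ∈ U, Metric.thickening ε (S z)).Nonempty

theorem stmt_14 {X Y : Type*} [TopologicalSpace X] [T2Space X] [ParacompactSpace X]
    [NormedAddCommGroup Y] [NormedSpace ℝ Y]
    (T : X → Set Y) (hconv : ∀ x, Convex ℝ (T x)) :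
    AlmostLSC T ↔
      ∀ ε : ℝ, 0 < ε → ∃ f : X → Y, Continuous f ∧ ∀ x, f x ∈ Metric.thickening ε (T x) := by
  constructor
  · intro h ε hε
    obtain ⟨g, hg⟩ := exists_continuous_forall_mem_convex_of_local_const
      (t := fun x => Metric.thickening ε (T x))
      (fun x => (hconv x).thickening ε) (fun x => by
        obtain ⟨U, hU, c, hc⟩ := h x ε hε
        simp only [mem_iInter] at hc
        exact ⟨c, eventually_of_mem hU hc⟩)
    exact ⟨g, g.continuous, hg⟩
  · intro h x ε hε
    obtain ⟨f, hf, hfm⟩ := h (ε / 2) (by linarith)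
    refine ⟨f ⁻¹' Metric.ball (f x) (ε / 2), hf.continuousAt.preimage_mem_nhds
      (Metric.ball_mem_nhds _ (by linarith)), f x, ?_⟩
    simp only [mem_iInter]
    intro z hz
    have hTz : (T z).Nonempty := by
      by_contra hne
      rw [not_nonempty_iff_eq_empty] at hne
      simpa [hne] using hfm z
    rw [Metric.mem_thickening_iff_infDist_lt hTz]
    have h1 : infDist (f z) (T z) < ε / 2 :=
      (Metric.mem_thickening_iff_infDist_lt hTz).mp (hfm z)
    have hz' : dist (f x) (f z) < ε / 2 := by
      simpa [dist_comm] using hz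
    calc infDist (f x) (T z) ≤ infDist (f z) (T z) + dist (f x) (f z) :=
        infDist_le_infDist_add_dist
      _ < ε / 2 + ε / 2 := add_lt_add h1 hz' 
      _ = ε := by ring
end

section
/- Let X be a normed linear space, B₁ = {x ∈ X : ‖x‖ ≤ 1}, ξ ∈ B₁ and η ∈ X such that ‖η − ξ‖ = d(η, B₁). Then ‖η − ξ‖ ≤ ‖η − z‖ for every z ∈ I_{B₁}(ξ), and consequently ‖η − ξ‖ = d(η, B₁) = d(η, cl I_{B₁}(ξ)). -/
open Metric Set Filter Topology Pointwise
open scoped ENNReal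

theorem stmt_18 {X : Type*} [NormedAddCommGroup X] [NormedSpace ℝ X]
    (ξ η : X) (hξ : ξ ∈ Metric.closedBall (0:X) 1)
    (h : ‖η - ξ‖ = Metric.infDist η (Metric.closedBall (0:X) 1)) :
    (∀ z ∈ inwardSet (Metric.closedBall (0:X) 1) ξ, ‖η - ξ‖ ≤ ‖η - z‖) ∧
    ‖η - ξ‖ = Metric.infDist η (Metric.closedBall (0:X) 1) ∧
    Metric.infDist η (Metric.closedBall (0:X) 1) =
      Metric.infDist η (closure (inwardSet (Metric.closedBall (0:X) 1) ξ)) := by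
  have hξ1 : ‖ξ‖ ≤ 1 := by simpa using hξ
  have key : ∀ z ∈ inwardSet (Metric.closedBall (0:X) 1) ξ, ‖η - ξ‖ ≤ ‖η - z‖ := by
    rintro z ⟨y, hy, r, hr, rfl⟩
    have hy1 : ‖y‖ ≤ 1 := by simpa using hy
    by_cases hr1 : r ≤ 1
    · have hmem : ξ + r • (y - ξ) ∈ Metric.closedBall (0:X) 1 := by
        simp only [Metric.mem_closedBall, dist_zero_right]
        have : ξ + r • (y - ξ) = (1 - r) • ξ + r • y := by
          simp [smul_sub, sub_smul]; abel
        rw [this]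
        calc ‖(1 - r) • ξ + r • y‖ ≤ ‖(1 - r) • ξ‖ + ‖r • y‖ := norm_add_le _ _
          _ = (1 - r) * ‖ξ‖ + r * ‖y‖ := by
            rw [norm_smul, norm_smul, Real.norm_of_nonneg (by linarith),
              Real.norm_of_nonneg hr]
          _ ≤ (1 - r) * 1 + r * 1 := by
            gcongr <;> linarith
          _ = 1 := by ring
      calc ‖η - ξ‖ = Metric.infDist η (Metric.closedBall (0:X) 1) := h
        _ ≤ dist η (ξ + r • (y - ξ)) := Metric.infDist_le_dist_of_mem hmem
        _ = ‖η - (ξ + r • (y - ξ))‖ := by rw [dist_eq_norm]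
    · push_neg at hr1
      have hrpos : 0 < r := by linarith
      set t : ℝ := 1 / r with ht
      have ht0 : 0 < t := by positivity
      have ht1 : t ≤ 1 := by
        rw [ht, div_le_one hrpos]; linarith
      have hyid : η - y = (1 - t) • (η - ξ) + t • (η - (ξ + r • (y - ξ))) := by
        have h1 : t • (r • (y - ξ)) = y - ξ := by
          rw [smul_smul, ht, one_div_mul_cancel (ne_of_gt hrpos), one_smul]
        have := h1
        rw [smul_sub, smul_sub, sub_smul, sub_smul, one_smul, smul_add, h1]
        abel_nf
        simp
      have step : ‖η - ξ‖ ≤ ‖η - y‖ := by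
        calc ‖η - ξ‖ = Metric.infDist η (Metric.closedBall (0:X) 1) := h
          _ ≤ dist η y := Metric.infDist_le_dist_of_mem hy
          _ = ‖η - y‖ := by rw [dist_eq_norm]
      have step2 : ‖η - y‖ ≤ (1 - t) * ‖η - ξ‖ + t * ‖η - (ξ + r • (y - ξ))‖ := by
        rw [hyid]
        calc ‖(1 - t) • (η - ξ) + t • (η - (ξ + r • (y - ξ)))‖
            ≤ ‖(1 - t) • (η - ξ)‖ + ‖t • (η - (ξ + r • (y - ξ)))‖ := norm_add_le _ _
          _ = (1 - t) * ‖η - ξ‖ + t * ‖η - (ξ + r • (y - ξ))‖ := by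
            rw [norm_smul, norm_smul, Real.norm_of_nonneg (by linarith),
              Real.norm_of_nonneg ht0.le]
      nlinarith [step, step2]
  refine ⟨key, h, ?_⟩
  have hξI : ξ ∈ inwardSet (Metric.closedBall (0:X) 1) ξ :=
    ⟨ξ, hξ, 0, le_refl 0, by simp⟩
  have hne : (inwardSet (Metric.closedBall (0:X) 1) ξ).Nonempty := ⟨ξ, hξI⟩
  rw [Metric.infDist_closure]
  apply le_antisymm
  · rw [← h, Metric.infDist_eq_iInf]
    have : Nonempty (inwardSet (Metric.closedBall (0:X) 1) ξ) := hne.to_subtype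
    exact le_ciInf fun z => by
      rw [dist_eq_norm]; exact key z z.2
  · rw [← h]
    calc Metric.infDist η (inwardSet (Metric.closedBall (0:X) 1) ξ)
        ≤ dist η ξ := Metric.infDist_le_dist_of_mem hξI
      _ = ‖η - ξ‖ := by rw [dist_eq_norm]
end
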